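/- For z₀ = (x₀,p₀) ∈ ℝ² with Θ(z₀) = 0 (Θ(x,p) = sinc(xp/(2ℏ))), and any c = (c₁,c₂) ∈ ℂ² with −(c₁ ∂₁Θ(z₀) + c₂ ∂₂Θ(z₀)) = 1, the distribution a_σ = (2πℏ)(c₁ ∂₁δ_{z₀} + c₂ ∂₂δ_{z₀}) satisfies Θ · a_σ = (2πℏ) δ_{z₀} in 𝒟′(ℝ²). -/

import Mathlib

open Real

noncomputable def sinc (t : ℝ) : ℝ := if t = 0 then 1 else Real.sin t / t

/-- `Θ(x,p) = sinc(xp/(2ℏ))`. -/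
noncomputable def Theta (ℏ : ℝ) (z : ℝ × ℝ) : ℝ := _root_.sinc (z.1 * z.2 / (2 * ℏ))

/-- If `Θ(z₀) = 0` and `−(c₁∂₁Θ(z₀) + c₂∂₂Θ(z₀)) = 1`, then the distribution
`a_σ = (2πℏ)(c₁∂₁δ_{z₀} + c₂∂₂δ_{z₀})` satisfies `Θ·a_σ = (2πℏ)δ_{z₀}`: pairing with any
test function `φ ∈ C_c^∞`, and using `(∂_jδ_{z₀})(ψ) = −∂_jψ(z₀)` with `ψ = Θφ`, gives
`(2πℏ)φ(z₀)`. -/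
theorem delta_derivative_solution (ℏ : ℝ) (hℏ : 0 < ℏ) (z₀ : ℝ × ℝ)
    (hΘ : Theta ℏ z₀ = 0) (c₁ c₂ : ℂ)
    (hc : -(c₁ * ((fderiv ℝ (Theta ℏ) z₀ (1, 0) : ℝ) : ℂ)
          + c₂ * ((fderiv ℝ (Theta ℏ) z₀ (0, 1) : ℝ) : ℂ)) = 1) :
    ∀ φ : ℝ × ℝ → ℂ, ContDiff ℝ (⊤ : ℕ∞) φ → HasCompactSupport φ →
      ((2 * π * ℏ : ℝ) : ℂ) *
        (c₁ * (-(fderiv ℝ (fun z => ((Theta ℏ z : ℝ) : ℂ) * φ z) z₀ (1, 0)))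
         + c₂ * (-(fderiv ℝ (fun z => ((Theta ℏ z : ℝ) : ℂ) * φ z) z₀ (0, 1))))
      = ((2 * π * ℏ : ℝ) : ℂ) * φ z₀ := by
  intro φ hφ _
  -- the argument of sinc at z₀ is nonzero
  have ht0 : z₀.1 * z₀.2 / (2 * ℏ) ≠ 0 := by
    intro h
    rw [Theta, _root_.sinc, if_pos h] at hΘ
    exact one_ne_zero hΘ
  have hcont : ContinuousAt (fun z : ℝ × ℝ => z.1 * z.2 / (2 * ℏ)) z₀ := by
    fun_prop
  have hev : (fun z : ℝ × ℝ => Real.sin (z.1 * z.2 / (2 * ℏ)) / (z.1 * z.2 / (2 * ℏ)))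
      =ᶠ[nhds z₀] Theta ℏ := by
    filter_upwards [hcont.eventually_ne ht0] with z hz
    rw [Theta, _root_.sinc, if_neg hz]
  have hdiff' : DifferentiableAt ℝ
      (fun z : ℝ × ℝ => Real.sin (z.1 * z.2 / (2 * ℏ)) / (z.1 * z.2 / (2 * ℏ))) z₀ := by
    have hg : DifferentiableAt ℝ (fun z : ℝ × ℝ => z.1 * z.2 / (2 * ℏ)) z₀ := by
      have : DifferentiableAt ℝ (fun z : ℝ × ℝ => z.1 * z.2) z₀ :=
        differentiableAt_fst.mul differentiableAt_snd
      simpa [div_eq_mul_inv] using this.mul_const (2 * ℏ)⁻¹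
    have hh : DifferentiableAt ℝ (fun t : ℝ => Real.sin t / t)
        (z₀.1 * z₀.2 / (2 * ℏ)) :=
      Real.differentiable_sin.differentiableAt.div differentiableAt_id ht0
    exact hh.comp z₀ hg
  have hdiff : DifferentiableAt ℝ (Theta ℏ) z₀ := hdiff'.congr_of_eventuallyEq hev.symm
  have hCd : HasFDerivAt (fun z => ((Theta ℏ z : ℝ) : ℂ))
      (Complex.ofRealCLM.comp (fderiv ℝ (Theta ℏ) z₀)) z₀ :=
    Complex.ofRealCLM.hasFDerivAt.comp z₀ hdiff.hasFDerivAt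
  have hφd : DifferentiableAt ℝ φ z₀ := (hφ.differentiable (by simp)) z₀
  have hmul : fderiv ℝ (fun z => ((Theta ℏ z : ℝ) : ℂ) * φ z) z₀
      = ((Theta ℏ z₀ : ℝ) : ℂ) • fderiv ℝ φ z₀
        + φ z₀ • (Complex.ofRealCLM.comp (fderiv ℝ (Theta ℏ) z₀)) := by
    have := fderiv_fun_mul hCd.differentiableAt hφd
    rw [this, hCd.fderiv]
  have key : ∀ v : ℝ × ℝ, fderiv ℝ (fun z => ((Theta ℏ z : ℝ) : ℂ) * φ z) z₀ v
      = φ z₀ * ((fderiv ℝ (Theta ℏ) z₀ v : ℝ) : ℂ) := by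
    intro v
    rw [hmul]
    simp [hΘ]
  rw [key (1, 0), key (0, 1)]
  calc ((2 * π * ℏ : ℝ) : ℂ) *
        (c₁ * -(φ z₀ * ((fderiv ℝ (Theta ℏ) z₀ (1, 0) : ℝ) : ℂ))
         + c₂ * -(φ z₀ * ((fderiv ℝ (Theta ℏ) z₀ (0, 1) : ℝ) : ℂ)))
      = ((2 * π * ℏ : ℝ) : ℂ) * φ z₀ *
        (-(c₁ * ((fderiv ℝ (Theta ℏ) z₀ (1, 0) : ℝ) : ℂ)
          + c₂ * ((fderiv ℝ (Theta ℏ) z₀ (0, 1) : ℝ) : ℂ))) := by ring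
    _ = ((2 * π * ℏ : ℝ) : ℂ) * φ z₀ := by rw [hc, mul_one]
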